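/- Let the Borel measure μ admit λ ∈ (0, +∞) with ∫_{y∈ℝ} e^{λ|y|} dμ(y) < +∞, and let T ∈ (0, +∞). Suppose (u_n)_{n=0}^∞ ⊂ C¹([0, T], L^∞(ℝ)) is a sequence of solutions to equation (4.1) such that sup_{n∈ℕ} ‖u_n(0) − u_0(0)‖_{L^∞(ℝ)} ≤ 1 and lim_{n→∞} ‖u_n(0) − u_0(0)‖_{L^∞([−I,+I])} = 0 for every I ∈ (0, +∞). Then lim_{n→∞} sup_{t∈[0,T]} ‖u_n(t) − u_0(t)‖_{L^∞([−J,+J])} = 0 holds for every J ∈ (0, +∞). -/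

import Mathlib

open MeasureTheory Filter Topology

/-- The convolution `(μ*u)(x) = ∫ u(x-y) dμ(y)`. -/
noncomputable def mconv (μ : Measure ℝ) (u : ℝ → ℝ) : ℝ → ℝ :=
  fun x => ∫ y, u (x - y) ∂μ

/-- A monostable nonlinearity: Lipschitz continuous, `f 0 = f 1 = 0`, `f > 0` on `(0,1)`. -/
def MonostableF (f : ℝ → ℝ) : Prop :=
  (∃ K : NNReal, LipschitzWith K f) ∧ f 0 = 0 ∧ f 1 = 0 ∧
    ∀ u : ℝ, 0 < u → u < 1 → 0 < f u

/-- `U : I → L^∞(ℝ)` is a (continuously differentiable) solution of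
`u_t = μ*u - u + f(u)` on the time interval `I`. -/
def IsSolutionOn (μ : Measure ℝ) (f : ℝ → ℝ) (I : Set ℝ)
    (U : ℝ → Lp ℝ ⊤ (volume : Measure ℝ)) : Prop :=
  ∃ D : ℝ → Lp ℝ ⊤ (volume : Measure ℝ),
    ContinuousOn D I ∧
    (∀ t ∈ I, HasDerivWithinAt U (D t) I t) ∧
    (∀ t ∈ I, (D t : ℝ → ℝ) =ᵐ[volume]
      fun x => mconv μ (U t) x - (U t : ℝ → ℝ) x + f ((U t : ℝ → ℝ) x))

/-!
Measure the distance between two solutions in the weighted norm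
`‖w‖_λ = ess sup e^{-λ|x|} |w x|`. Since `e^{-λ|x|} ≤ e^{λ|y|} e^{-λ|x-y|}`, convolution with `μ`
is bounded for this norm by `∫ e^{λ|y|} dμ`, so the right-hand side of (4.1) is Lipschitz for it
and Grönwall gives `‖u_n(t) - u_0(t)‖_λ ≤ e^{CT} ‖u_n(0) - u_0(0)‖_λ`. On `[-J, J]` the weighted
norm controls the sup norm up to the factor `e^{λJ}`, while the initial weighted distance is at
most the sup over `[-I, I]` plus `e^{-λI}` times the global bound `1`. Letting `n → ∞` and then
`I → ∞` gives the claim.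
-/

open Set ENNReal

namespace MeasureTheory

lemma ae_norm_le_toReal_eLpNorm_top {α E : Type*} [MeasurableSpace α] {μ : Measure α}
    [NormedAddCommGroup E] {f : α → E} (hf : eLpNorm f ∞ μ ≠ ∞) :
    ∀ᵐ x ∂μ, ‖f x‖ ≤ (eLpNorm f ∞ μ).toReal := by
  rw [eLpNorm_exponent_top] at hf ⊢
  filter_upwards [ae_le_eLpNormEssSup (f := f)] with x hx
  rw [← toReal_enorm]
  exact ENNReal.toReal_mono hf hx

namespace Lp

variable {α E : Type*} [MeasurableSpace α] {μ : Measure α} [NormedAddCommGroup E]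

lemma ae_norm_le_norm_top (f : Lp E ∞ μ) : ∀ᵐ x ∂μ, ‖f x‖ ≤ ‖f‖ :=
  ae_norm_le_toReal_eLpNorm_top (Lp.eLpNorm_ne_top f)

lemma norm_le_of_ae_norm_le_top {f : Lp E ∞ μ} {C : ℝ} (hC : 0 ≤ C)
    (h : ∀ᵐ x ∂μ, ‖f x‖ ≤ C) : ‖f‖ ≤ C := by
  rw [Lp.norm_def, eLpNorm_exponent_top]
  exact ENNReal.toReal_le_of_le_ofReal hC (eLpNormEssSup_le_of_ae_bound h)

end Lp

end MeasureTheory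

local notation "L∞" => Lp ℝ ∞ (volume : Measure ℝ)

noncomputable def expWeight (lam x : ℝ) : ℝ := Real.exp (-(lam * |x|))

section expWeight

variable {lam : ℝ}

lemma expWeight_pos (lam x : ℝ) : 0 < expWeight lam x := Real.exp_pos _

lemma continuous_expWeight (lam : ℝ) : Continuous (expWeight lam) := by
  unfold expWeight; fun_prop

lemma expWeight_mul_exp (lam x : ℝ) : expWeight lam x * Real.exp (lam * |x|) = 1 := by
  rw [expWeight, ← Real.exp_add, neg_add_cancel, Real.exp_zero]

variable (hlam : 0 ≤ lam)
include hlam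

lemma expWeight_le_one (x : ℝ) : expWeight lam x ≤ 1 :=
  Real.exp_le_one_iff.2 (neg_nonpos.2 (by positivity))

lemma expWeight_le_of_le_abs {I x : ℝ} (h : I ≤ |x|) :
    expWeight lam x ≤ Real.exp (-(lam * I)) :=
  Real.exp_le_exp.2 (neg_le_neg (mul_le_mul_of_nonneg_left h hlam))

lemma expWeight_le_exp_mul_expWeight_sub (x y : ℝ) :
    expWeight lam x ≤ Real.exp (lam * |y|) * expWeight lam (x - y) := by
  rw [expWeight, expWeight, ← Real.exp_add, Real.exp_le_exp]
  have : |x - y| ≤ |x| + |y| := abs_sub _ _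
  nlinarith

noncomputable def expWeightLinfty : L∞ :=
  (memLp_top_of_bound (continuous_expWeight lam).aestronglyMeasurable 1
    (ae_of_all _ fun x => by
      rw [Real.norm_of_nonneg (expWeight_pos lam x).le]; exact expWeight_le_one hlam x)).toLp _

/-- `‖expWeightMul hlam w‖` is the weighted norm `ess sup e^{-λ|x|} |w x|`; realising it through
a continuous linear map lets it be differentiated along solutions. -/
noncomputable def expWeightMul : L∞ →L[ℝ] L∞ :=
  (ContinuousLinearMap.mul ℝ ℝ).holderL volume ∞ ∞ ∞ (expWeightLinfty hlam)

lemma expWeightLinfty_ae_eq : expWeightLinfty hlam =ᵐ[volume] expWeight lam :=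
  MemLp.coeFn_toLp _

lemma expWeightMul_ae_eq (w : L∞) :
    expWeightMul hlam w =ᵐ[volume] fun x => expWeight lam x * w x := by
  filter_upwards [(ContinuousLinearMap.mul ℝ ℝ).coeFn_holder (r := ∞) (expWeightLinfty hlam) w,
    expWeightLinfty_ae_eq hlam] with x hmul hweight
  rw [expWeightMul, ContinuousLinearMap.holderL_apply_apply, hmul, ← hweight]
  rfl

lemma ae_expWeight_mul_abs_le (w : L∞) :
    ∀ᵐ x, expWeight lam x * |w x| ≤ ‖expWeightMul hlam w‖ := by
  filter_upwards [expWeightMul_ae_eq hlam w, Lp.ae_norm_le_norm_top (expWeightMul hlam w)]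
    with x heq hle
  rwa [heq, Real.norm_eq_abs, abs_mul, abs_of_pos (expWeight_pos lam x)] at hle

lemma norm_expWeightMul_le {w : L∞} {M : ℝ} (hM : 0 ≤ M)
    (h : ∀ᵐ x, expWeight lam x * |w x| ≤ M) : ‖expWeightMul hlam w‖ ≤ M := by
  refine Lp.norm_le_of_ae_norm_le_top hM ?_
  filter_upwards [expWeightMul_ae_eq hlam w, h] with x heq hle
  rwa [heq, Real.norm_eq_abs, abs_mul, abs_of_pos (expWeight_pos lam x)]

lemma eLpNorm_restrict_Icc_le (w : L∞) (J : ℝ) :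
    eLpNorm w ∞ (volume.restrict (Icc (-J) J)) ≤
      ENNReal.ofReal (Real.exp (lam * J) * ‖expWeightMul hlam w‖) := by
  rw [eLpNorm_exponent_top]
  refine eLpNormEssSup_le_of_ae_bound ((ae_restrict_iff' measurableSet_Icc).2 ?_)
  filter_upwards [ae_expWeight_mul_abs_le hlam w] with x hx hxJ
  calc ‖w x‖ = expWeight lam x * |w x| * Real.exp (lam * |x|) := by
        rw [Real.norm_eq_abs, mul_comm (expWeight lam x), mul_assoc, expWeight_mul_exp, mul_one]
    _ ≤ ‖expWeightMul hlam w‖ * Real.exp (lam * J) := by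
        gcongr; exact abs_le.2 hxJ
    _ = Real.exp (lam * J) * ‖expWeightMul hlam w‖ := mul_comm _ _

lemma ofReal_norm_expWeightMul_le (w : L∞) (I : ℝ) :
    ENNReal.ofReal ‖expWeightMul hlam w‖ ≤
      eLpNorm w ∞ (volume.restrict (Icc (-I) I)) +
        ENNReal.ofReal (Real.exp (-(lam * I)) * ‖w‖) := by
  set b := eLpNorm w ∞ (volume.restrict (Icc (-I) I))
  have hb : b ≠ ∞ :=
    ((eLpNorm_mono_measure _ Measure.restrict_le_self).trans_lt (Lp.eLpNorm_lt_top w)).ne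
  have hloc : ∀ᵐ x, x ∈ Icc (-I) I → ‖w x‖ ≤ b.toReal :=
    (ae_restrict_iff' measurableSet_Icc).1 (ae_norm_le_toReal_eLpNorm_top hb)
  have hle : ‖expWeightMul hlam w‖ ≤ b.toReal + Real.exp (-(lam * I)) * ‖w‖ := by
    refine norm_expWeightMul_le hlam (by positivity) ?_
    filter_upwards [hloc, Lp.ae_norm_le_norm_top w] with x hxloc hxglob
    rw [← Real.norm_eq_abs]
    by_cases hx : x ∈ Icc (-I) I
    · calc expWeight lam x * ‖w x‖ ≤ 1 * b.toReal :=
            mul_le_mul (expWeight_le_one hlam x) (hxloc hx) (norm_nonneg _) zero_le_one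
        _ ≤ _ := by rw [one_mul]; exact le_add_of_nonneg_right (by positivity)
    · rw [mem_Icc, ← abs_le, not_le] at hx
      calc expWeight lam x * ‖w x‖ ≤ Real.exp (-(lam * I)) * ‖w‖ :=
            mul_le_mul (expWeight_le_of_le_abs hlam hx.le) hxglob (norm_nonneg _) (by positivity)
        _ ≤ _ := le_add_of_nonneg_left ENNReal.toReal_nonneg
  calc ENNReal.ofReal ‖expWeightMul hlam w‖
      ≤ ENNReal.ofReal (b.toReal + Real.exp (-(lam * I)) * ‖w‖) := ENNReal.ofReal_le_ofReal hle
    _ ≤ ENNReal.ofReal b.toReal + ENNReal.ofReal (Real.exp (-(lam * I)) * ‖w‖) :=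
        ENNReal.ofReal_add_le
    _ ≤ _ := by gcongr; exact ENNReal.ofReal_toReal_le

end expWeight

lemma ae_ae_sub_of_ae {G : Type*} [AddGroup G] [MeasurableSpace G] [MeasurableAdd₂ G]
    [MeasurableNeg G] {ν : Measure G} [SFinite ν] [ν.IsAddLeftInvariant] (μ : Measure G)
    [SFinite μ] {p : G → Prop} (hp : ∀ᵐ z ∂ν, p z) : ∀ᵐ x ∂ν, ∀ᵐ y ∂μ, p (x - y) :=
  Measure.ae_ae_of_ae_prod ((quasiMeasurePreserving_sub ν μ).ae hp)

section mconv

variable (μ : Measure ℝ) [IsFiniteMeasure μ]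

lemma ae_integrable_comp_sub (w : L∞) : ∀ᵐ x, Integrable (fun y => w (x - y)) μ := by
  filter_upwards [ae_ae_sub_of_ae μ (Lp.ae_norm_le_norm_top w)] with x hx
  exact Integrable.mono' (integrable_const ‖w‖)
    ((Lp.stronglyMeasurable w).comp_measurable
      (measurable_const.sub measurable_id)).aestronglyMeasurable hx

lemma mconv_sub_ae_eq (a b : L∞) : mconv μ ⇑(a - b) =ᵐ[volume] mconv μ a - mconv μ b := by
  filter_upwards [ae_integrable_comp_sub μ a, ae_integrable_comp_sub μ b,
    ae_ae_sub_of_ae μ (Lp.coeFn_sub a b)] with x ha hb hab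
  rw [Pi.sub_apply, mconv, mconv, mconv, ← integral_sub ha hb]
  exact integral_congr_ae hab

lemma ae_expWeight_mul_abs_mconv_le {lam : ℝ} (hlam : 0 ≤ lam)
    (hint : Integrable (fun y => Real.exp (lam * |y|)) μ) {w : L∞} {M : ℝ}
    (hw : ∀ᵐ z, expWeight lam z * |w z| ≤ M) :
    ∀ᵐ x, expWeight lam x * |mconv μ w x| ≤ (∫ y, Real.exp (lam * |y|) ∂μ) * M := by
  filter_upwards [ae_integrable_comp_sub μ w, ae_ae_sub_of_ae μ hw] with x hint_w hx
  have hpointwise : ∀ᵐ y ∂μ, expWeight lam x * |w (x - y)| ≤ Real.exp (lam * |y|) * M := by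
    filter_upwards [hx] with y hy
    calc expWeight lam x * |w (x - y)|
        ≤ Real.exp (lam * |y|) * expWeight lam (x - y) * |w (x - y)| := by
          gcongr; exact expWeight_le_exp_mul_expWeight_sub hlam x y
      _ ≤ Real.exp (lam * |y|) * M := by rw [mul_assoc]; gcongr
  calc expWeight lam x * |mconv μ w x|
      ≤ expWeight lam x * ∫ y, |w (x - y)| ∂μ := by
        gcongr
        · exact (expWeight_pos lam x).le
        · exact abs_integral_le_integral_abs
    _ = ∫ y, expWeight lam x * |w (x - y)| ∂μ := (integral_const_mul _ _).symm
    _ ≤ ∫ y, Real.exp (lam * |y|) * M ∂μ :=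
        integral_mono_ae (hint_w.abs.const_mul _) (hint.mul_const M) hpointwise
    _ = (∫ y, Real.exp (lam * |y|) ∂μ) * M := integral_mul_const _ _

end mconv

lemma norm_expWeightMul_sub_le_of_ae_eq (μ : Measure ℝ) [IsFiniteMeasure μ] {lam : ℝ}
    (hlam : 0 ≤ lam) (hint : Integrable (fun y => Real.exp (lam * |y|)) μ)
    {f : ℝ → ℝ} {K : NNReal} (hK : LipschitzWith K f) {a₁ a₂ d₁ d₂ : L∞}
    (hd₁ : ⇑d₁ =ᵐ[volume] fun x => mconv μ a₁ x - a₁ x + f (a₁ x))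
    (hd₂ : ⇑d₂ =ᵐ[volume] fun x => mconv μ a₂ x - a₂ x + f (a₂ x)) :
    ‖expWeightMul hlam (d₁ - d₂)‖ ≤
      ((∫ y, Real.exp (lam * |y|) ∂μ) + 1 + K) * ‖expWeightMul hlam (a₁ - a₂)‖ := by
  set M := ‖expWeightMul hlam (a₁ - a₂)‖
  have hM := ae_expWeight_mul_abs_le hlam (a₁ - a₂)
  refine norm_expWeightMul_le hlam (by positivity) ?_
  filter_upwards [hd₁, hd₂, Lp.coeFn_sub d₁ d₂, Lp.coeFn_sub a₁ a₂, hM,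
    mconv_sub_ae_eq μ a₁ a₂, ae_expWeight_mul_abs_mconv_le μ hlam hint hM]
    with x hx₁ hx₂ hd ha hdiff hconv_eq hconv
  rw [hd, Pi.sub_apply, hx₁, hx₂]
  rw [ha, Pi.sub_apply] at hdiff
  rw [hconv_eq, Pi.sub_apply] at hconv
  have hlip : |f (a₁ x) - f (a₂ x)| ≤ K * |a₁ x - a₂ x| := by
    simpa [Real.dist_eq] using hK.dist_le_mul (a₁ x) (a₂ x)
  have htri : |(mconv μ a₁ x - a₁ x + f (a₁ x)) - (mconv μ a₂ x - a₂ x + f (a₂ x))| ≤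
      |mconv μ a₁ x - mconv μ a₂ x| + |a₁ x - a₂ x| + |f (a₁ x) - f (a₂ x)| := by
    calc _ = |(mconv μ a₁ x - mconv μ a₂ x) + -(a₁ x - a₂ x) + (f (a₁ x) - f (a₂ x))| := by
          ring_nf
      _ ≤ _ := by
        simpa only [abs_neg] using abs_add_three (mconv μ a₁ x - mconv μ a₂ x)
          (-(a₁ x - a₂ x)) (f (a₁ x) - f (a₂ x))
  have hweight := (expWeight_pos lam x).le
  calc _ ≤ expWeight lam x * (|mconv μ a₁ x - mconv μ a₂ x| + |a₁ x - a₂ x| +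
          K * |a₁ x - a₂ x|) := by gcongr; exact htri.trans (by gcongr)
    _ = expWeight lam x * |mconv μ a₁ x - mconv μ a₂ x| + expWeight lam x * |a₁ x - a₂ x| +
          K * (expWeight lam x * |a₁ x - a₂ x|) := by ring
    _ ≤ (∫ y, Real.exp (lam * |y|) ∂μ) * M + M + K * M := by gcongr
    _ = _ := by ring

lemma norm_le_mul_exp_of_norm_deriv_le {F : Type*} [NormedAddCommGroup F] [NormedSpace ℝ F]
    {g g' : ℝ → F} {C a b : ℝ} (hg : ∀ t ∈ Icc a b, HasDerivWithinAt g (g' t) (Icc a b) t)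
    (hbound : ∀ t ∈ Icc a b, ‖g' t‖ ≤ C * ‖g t‖) :
    ∀ t ∈ Icc a b, ‖g t‖ ≤ ‖g a‖ * Real.exp (C * (t - a)) := by
  have hcont : ContinuousOn g (Icc a b) := fun t ht => (hg t ht).continuousWithinAt
  have hright : ∀ t ∈ Ico a b, HasDerivWithinAt g (g' t) (Ici t) t := fun t ht =>
    (hg t (Ico_subset_Icc_self ht)).mono_of_mem_nhdsWithin (Icc_mem_nhdsGE_of_mem ht)
  intro t ht
  simpa only [gronwallBound_ε0] using norm_le_gronwallBound_of_norm_deriv_right_le (K := C)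
    (ε := 0) hcont hright le_rfl (fun s hs => by simpa using hbound s (Ico_subset_Icc_self hs))
    t ht

section solutions

variable (μ : Measure ℝ) [IsFiniteMeasure μ] {lam : ℝ} (hlam : 0 ≤ lam)
  (hint : Integrable (fun y => Real.exp (lam * |y|)) μ)
  {f : ℝ → ℝ} {K : NNReal} (hK : LipschitzWith K f) {T : ℝ} {U V : ℝ → L∞}
  (hU : IsSolutionOn μ f (Icc 0 T) U) (hV : IsSolutionOn μ f (Icc 0 T) V)
include hlam hint hK hU hV

lemma norm_expWeightMul_sub_le_of_isSolutionOn :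
    ∀ t ∈ Icc 0 T, ‖expWeightMul hlam (U t - V t)‖ ≤
      ‖expWeightMul hlam (U 0 - V 0)‖ *
        Real.exp (((∫ y, Real.exp (lam * |y|) ∂μ) + 1 + K) * t) := by
  obtain ⟨DU, -, hDU, hU_eq⟩ := hU
  obtain ⟨DV, -, hDV, hV_eq⟩ := hV
  simpa only [sub_zero] using norm_le_mul_exp_of_norm_deriv_le
    (g := fun t => expWeightMul hlam (U t - V t))
    (fun t ht => (expWeightMul hlam).hasFDerivAt.comp_hasDerivWithinAt t
      ((hDU t ht).sub (hDV t ht)))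
    (fun t ht => norm_expWeightMul_sub_le_of_ae_eq μ hlam hint hK (hU_eq t ht) (hV_eq t ht))

lemma eLpNorm_sub_restrict_Icc_le_of_isSolutionOn (h0 : ‖U 0 - V 0‖ ≤ 1) (I J : ℝ) {t : ℝ}
    (ht : t ∈ Icc 0 T) :
    eLpNorm (fun x => U t x - V t x) ∞ (volume.restrict (Icc (-J) J)) ≤
      ENNReal.ofReal (Real.exp (lam * J + ((∫ y, Real.exp (lam * |y|) ∂μ) + 1 + K) * T)) *
        (eLpNorm (fun x => U 0 x - V 0 x) ∞ (volume.restrict (Icc (-I) I)) +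
          ENNReal.ofReal (Real.exp (-(lam * I)))) := by
  have hcoe (s : Set ℝ) (a b : L∞) : eLpNorm (fun x => a x - b x) ∞ (volume.restrict s) =
      eLpNorm ⇑(a - b) ∞ (volume.restrict s) :=
    eLpNorm_congr_ae (ae_restrict_of_ae (Lp.coeFn_sub a b).symm)
  set C := (∫ y, Real.exp (lam * |y|) ∂μ) + 1 + K
  have hC : 0 ≤ C := by positivity
  have hgrowth : ‖expWeightMul hlam (U t - V t)‖ ≤
      Real.exp (C * T) * ‖expWeightMul hlam (U 0 - V 0)‖ := by
    rw [mul_comm]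
    refine (norm_expWeightMul_sub_le_of_isSolutionOn μ hlam hint hK hU hV t ht).trans ?_
    gcongr
    exact ht.2
  rw [hcoe, hcoe]
  calc eLpNorm ⇑(U t - V t) ∞ (volume.restrict (Icc (-J) J))
      ≤ ENNReal.ofReal (Real.exp (lam * J) * ‖expWeightMul hlam (U t - V t)‖) :=
        eLpNorm_restrict_Icc_le hlam _ J
    _ ≤ ENNReal.ofReal (Real.exp (lam * J + C * T)) *
          ENNReal.ofReal ‖expWeightMul hlam (U 0 - V 0)‖ := by
        rw [← ENNReal.ofReal_mul (by positivity), Real.exp_add, mul_assoc]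
        gcongr
    _ ≤ _ := by
        gcongr
        refine (ofReal_norm_expWeightMul_le hlam _ I).trans ?_
        gcongr
        exact mul_le_of_le_one_right (Real.exp_pos _).le h0

end solutions

lemma ENNReal.tendsto_atTop_zero_of_le_mul_add {a : ℕ → ℝ≥0∞} {b : ℝ → ℕ → ℝ≥0∞}
    {c : ℝ → ℝ≥0∞} {A : ℝ≥0∞} (hA : A ≠ ∞) (hb : ∀ I, 0 < I → Tendsto (b I) atTop (𝓝 0))
    (hc : Tendsto c atTop (𝓝 0)) (h : ∀ I, 0 < I → ∀ n, a n ≤ A * (b I n + c I)) :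
    Tendsto a atTop (𝓝 0) := by
  refine tendsto_order.2 ⟨fun ε hε => absurd hε not_lt_zero, fun ε hε => ?_⟩
  have hAc : Tendsto (fun I => A * c I) atTop (𝓝 0) := by
    simpa using ENNReal.Tendsto.const_mul hc (Or.inr hA)
  obtain ⟨I, hIε, hI⟩ :=
    ((hAc.eventually (gt_mem_nhds hε)).and (eventually_gt_atTop 0)).exists
  have hbI : Tendsto (fun n => A * (b I n + c I)) atTop (𝓝 (A * c I)) := by
    simpa using ENNReal.Tendsto.const_mul ((hb I hI).add_const (c I)) (Or.inr hA)
  filter_upwards [hbI.eventually (gt_mem_nhds hIε)] with n hn using (h I hI n).trans_lt hn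

theorem proposition19_general (μ : Measure ℝ) (hμ : μ Set.univ = 1)
    (f : ℝ → ℝ) (hf : MonostableF f)
    (lam : ℝ) (hlam : 0 < lam)
    (hint : Integrable (fun y : ℝ => Real.exp (lam * |y|)) μ)
    (T : ℝ)
    (u : ℕ → ℝ → Lp ℝ ⊤ (volume : Measure ℝ))
    (hsol : ∀ n : ℕ, IsSolutionOn μ f (Set.Icc 0 T) (u n))
    (hbd : ∀ n : ℕ, ‖u n 0 - u 0 0‖ ≤ 1)
    (hconv : ∀ I : ℝ, 0 < I →
      Tendsto (fun n : ℕ =>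
          eLpNorm (fun x => (u n 0 : ℝ → ℝ) x - (u 0 0 : ℝ → ℝ) x) ⊤
            (volume.restrict (Set.Icc (-I) I))) atTop (𝓝 0)) :
    ∀ J : ℝ, 0 < J →
      Tendsto (fun n : ℕ =>
          ⨆ t ∈ Set.Icc (0 : ℝ) T,
            eLpNorm (fun x => (u n t : ℝ → ℝ) x - (u 0 t : ℝ → ℝ) x) ⊤
              (volume.restrict (Set.Icc (-J) J))) atTop (𝓝 0) := by
  intro J _
  have : IsProbabilityMeasure μ := ⟨hμ⟩
  obtain ⟨K, hK⟩ := hf.1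
  have htail : Tendsto (fun I => ENNReal.ofReal (Real.exp (-(lam * I)))) atTop (𝓝 0) := by
    simpa using (ENNReal.tendsto_ofReal (Real.tendsto_exp_neg_atTop_nhds_zero.comp
      (tendsto_id.const_mul_atTop hlam)))
  exact ENNReal.tendsto_atTop_zero_of_le_mul_add ENNReal.ofReal_ne_top hconv htail
    fun I _ n => iSup₂_le fun t ht => eLpNorm_sub_restrict_Icc_le_of_isSolutionOn μ hlam.le hint
      hK (hsol n) (hsol 0) (hbd n) I J ht

/-- Proposition 19 (continuous dependence, locally uniformly in space). -/
theorem proposition19 (μ : Measure ℝ) (hμ : μ Set.univ = 1)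
    (f : ℝ → ℝ) (hf : MonostableF f)
    (lam : ℝ) (hlam : 0 < lam)
    (hint : Integrable (fun y : ℝ => Real.exp (lam * |y|)) μ)
    (T : ℝ) (hT : 0 < T)
    (u : ℕ → ℝ → Lp ℝ ⊤ (volume : Measure ℝ))
    (hsol : ∀ n : ℕ, IsSolutionOn μ f (Set.Icc 0 T) (u n))
    (hbd : ∀ n : ℕ, ‖u n 0 - u 0 0‖ ≤ 1)
    (hconv : ∀ I : ℝ, 0 < I →
      Tendsto (fun n : ℕ =>
          eLpNorm (fun x => (u n 0 : ℝ → ℝ) x - (u 0 0 : ℝ → ℝ) x) ⊤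
            (volume.restrict (Set.Icc (-I) I))) atTop (𝓝 0)) :
    ∀ J : ℝ, 0 < J →
      Tendsto (fun n : ℕ =>
          ⨆ t ∈ Set.Icc (0 : ℝ) T,
            eLpNorm (fun x => (u n t : ℝ → ℝ) x - (u 0 t : ℝ → ℝ) x) ⊤
              (volume.restrict (Set.Icc (-J) J))) atTop (𝓝 0) :=
  proposition19_general μ hμ f hf lam hlam hint T u hsol hbd hconv
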